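/- Let K be a simplicial complex on [m] and R_K the quotient of the algebra R (with relations u_i t_i = u_i, t_i u_i = 0, u_i t_j = t_j u_i, t_i² = t_i, u_i² = 0, u_i u_j = −u_j u_i, t_i t_j = t_j t_i) by the ideal generated by u_σ for σ ∉ K, with differential d t_i = u_i, d u_i = 0 extended by the Leibniz rule. Then the Z-linear map sending the basis cochain σ* ∈ C̃*(K_ω) to u_σ t_{ω∖σ}, summed over all ω ⊆ [m], is a degree-one-shifting isomorphism of cochain complexes ⊕_{ω⊆[m]} C̃*(K_ω) → R_K, where C̃*(K_ω) is the augmented simplicial cochain complex of the full subcomplex K_ω. -/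

import Mathlib

open Finset
open scoped Classical

noncomputable section

abbrev FA (m : ℕ) := FreeAlgebra ℤ (Fin m ⊕ Fin m)

def uf (m : ℕ) (i : Fin m) : FA m := FreeAlgebra.ι ℤ (Sum.inl i)
def tf (m : ℕ) (i : Fin m) : FA m := FreeAlgebra.ι ℤ (Sum.inr i)

def ufProd (m : ℕ) (σ : Finset (Fin m)) : FA m :=
  ((σ.sort (· ≤ ·)).map (uf m)).prod

/-- The defining relations of the DGA `R_K`. -/
inductive RKRel (m : ℕ) (K : Finset (Fin m) → Prop) : FA m → FA m → Prop
  | ut_same (i : Fin m) : RKRel m K (uf m i * tf m i) (uf m i)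
  | tu_same (i : Fin m) : RKRel m K (tf m i * uf m i) 0
  | ut_comm {i j : Fin m} (h : i ≠ j) : RKRel m K (uf m i * tf m j) (tf m j * uf m i)
  | tt_same (i : Fin m) : RKRel m K (tf m i * tf m i) (tf m i)
  | uu_same (i : Fin m) : RKRel m K (uf m i * uf m i) 0
  | uu_anti {i j : Fin m} (h : i ≠ j) : RKRel m K (uf m i * uf m j) (-(uf m j * uf m i))
  | tt_comm (i j : Fin m) : RKRel m K (tf m i * tf m j) (tf m j * tf m i)
  | notface (σ : Finset (Fin m)) (h : ¬ K σ) : RKRel m K (ufProd m σ) 0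

abbrev RK (m : ℕ) (K : Finset (Fin m) → Prop) := RingQuot (RKRel m K)

def uqK (m : ℕ) (K : Finset (Fin m) → Prop) (i : Fin m) : RK m K :=
  RingQuot.mkRingHom (RKRel m K) (uf m i)
def tqK (m : ℕ) (K : Finset (Fin m) → Prop) (i : Fin m) : RK m K :=
  RingQuot.mkRingHom (RKRel m K) (tf m i)

def uProdK (m : ℕ) (K : Finset (Fin m) → Prop) (σ : Finset (Fin m)) : RK m K :=
  ((σ.sort (· ≤ ·)).map (uqK m K)).prod
def tProdK (m : ℕ) (K : Finset (Fin m) → Prop) (τ : Finset (Fin m)) : RK m K :=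
  ((τ.sort (· ≤ ·)).map (tqK m K)).prod

/-- The span of the monomials `u_σ t_τ` with `|σ| = k`: the degree-`k` part of `R_K`. -/
def degreePart (m : ℕ) (K : Finset (Fin m) → Prop) (k : ℕ) : Submodule ℤ (RK m K) :=
  Submodule.span ℤ
    {z | ∃ σ τ : Finset (Fin m), σ.card = k ∧ z = uProdK m K σ * tProdK m K τ}

/-- Index set for the basis of `⊕_{ω⊆[m]} C̃*(K_ω)`: pairs `(σ, ω)` with `σ ∈ K`
(possibly `σ = ∅`) and `σ ⊆ ω ⊆ [m]`; the generator `(σ, ω)` is the dual basis cochain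
`σ* ∈ C̃^{|σ|−1}(K_ω)`. -/
def SrcIdx (m : ℕ) (K : Finset (Fin m) → Prop) : Type :=
  {p : Finset (Fin m) × Finset (Fin m) // K p.1 ∧ p.1 ⊆ p.2}

/-- The ℤ-module `⊕_{ω⊆[m]} C̃*(K_ω)`. -/
abbrev Src (m : ℕ) (K : Finset (Fin m) → Prop) : Type := SrcIdx m K →₀ ℤ

/-- The simplicial coboundary on the basis element `σ* ∈ C̃*(K_ω)` (orientations from
the natural order of the vertices): `δ σ* = Σ_{v ∈ ω∖σ, σ∪v ∈ K} (−1)^{|{j∈σ : j<v}|} (σ∪v)*`. -/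
def srcDeltaBasis (m : ℕ) (K : Finset (Fin m) → Prop) (p : SrcIdx m K) : Src m K :=
  ∑ v ∈ (p.1.2 \ p.1.1).attach,
    if h : K (insert v.1 p.1.1) then
      Finsupp.single
        ⟨(insert v.1 p.1.1, p.1.2),
          ⟨h, Finset.insert_subset_iff.mpr
            ⟨(Finset.mem_sdiff.mp v.2).1, p.2.2⟩⟩⟩
        ((-1 : ℤ) ^ ((p.1.1.filter (· < v.1)).card))
    else 0

/-- The simplicial coboundary `δ` on `⊕_ω C̃*(K_ω)`, extended linearly. -/
def srcDelta (m : ℕ) (K : Finset (Fin m) → Prop) (x : Src m K) : Src m K :=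
  x.sum fun p c => c • srcDeltaBasis m K p

/-- The map `⊕_ω C̃*(K_ω) → R_K` sending `σ* ∈ C̃*(K_ω)` to `u_σ t_{ω∖σ}`. -/
def Phi (m : ℕ) (K : Finset (Fin m) → Prop) (x : Src m K) : RK m K :=
  x.sum fun p c => c • (uProdK m K p.1.1 * tProdK m K (p.1.2 \ p.1.1))

/-! The images `u_σ t_{ω∖σ}` (`σ ∈ K`, `σ ⊆ ω`) of the basis cochains span `R_K`: left
multiplication by a generator sends a monomial `u_σ t_τ` to `0` or `±` a monomial, and
`u_σ t_τ = u_σ t_{τ∖σ}`, while `u_σ = 0` for `σ ∉ K`. They are linearly independent because the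
defining relations hold for explicit operators `u_i`, `t_i` on the free module on pairs `(σ, τ)`,
and evaluating this representation at `(∅, ∅)` sends `u_σ t_τ` to the basis vector `(σ, τ)`.
Finally, by the Leibniz rule `d(u_σ t_τ) = (-1)^|σ| u_σ ∑_{v ∈ τ} u_v t_{τ∖v}`, and
`(-1)^|σ| u_σ u_v = u_v u_σ = (-1)^#{x ∈ σ | x < v} u_{σ ∪ v}` is the sign of the coboundary. -/

namespace RK

variable {m : ℕ} {K : Finset (Fin m) → Prop}

section Relations

lemma uqK_mul_tqK_self (i : Fin m) : uqK m K i * tqK m K i = uqK m K i := by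
  simpa [uqK, tqK] using RingQuot.mkRingHom_rel (RKRel.ut_same (K := K) i)

lemma tqK_mul_uqK_self (i : Fin m) : tqK m K i * uqK m K i = 0 := by
  simpa [uqK, tqK] using RingQuot.mkRingHom_rel (RKRel.tu_same (K := K) i)

lemma uqK_mul_tqK_comm {i j : Fin m} (h : i ≠ j) :
    uqK m K i * tqK m K j = tqK m K j * uqK m K i := by
  simpa [uqK, tqK] using RingQuot.mkRingHom_rel (RKRel.ut_comm (K := K) h)

lemma tqK_mul_tqK_self (i : Fin m) : tqK m K i * tqK m K i = tqK m K i := by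
  simpa [tqK] using RingQuot.mkRingHom_rel (RKRel.tt_same (K := K) i)

lemma uqK_mul_uqK_self (i : Fin m) : uqK m K i * uqK m K i = 0 := by
  simpa [uqK] using RingQuot.mkRingHom_rel (RKRel.uu_same (K := K) i)

lemma uqK_mul_uqK_anticomm {i j : Fin m} (h : i ≠ j) :
    uqK m K i * uqK m K j = (-1 : ℤ) • (uqK m K j * uqK m K i) := by
  simpa [uqK] using RingQuot.mkRingHom_rel (RKRel.uu_anti (K := K) h)

lemma tqK_mul_tqK_comm (i j : Fin m) : tqK m K i * tqK m K j = tqK m K j * tqK m K i := by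
  simpa [tqK] using RingQuot.mkRingHom_rel (RKRel.tt_comm (K := K) i j)

lemma uProdK_eq_zero_of_not_face {σ : Finset (Fin m)} (h : ¬ K σ) : uProdK m K σ = 0 := by
  have : uProdK m K σ = RingQuot.mkRingHom (RKRel m K) (ufProd m σ) := by
    simp only [uProdK, ufProd, map_list_prod, List.map_map]
    rfl
  simpa [this] using RingQuot.mkRingHom_rel (RKRel.notface σ h)

end Relations

section Monomials

lemma uProdK_empty : uProdK m K ∅ = 1 := by simp [uProdK]

lemma tProdK_empty : tProdK m K ∅ = 1 := by simp [tProdK]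

lemma uProdK_singleton (i : Fin m) : uProdK m K {i} = uqK m K i := by simp [uProdK]

lemma tProdK_singleton (i : Fin m) : tProdK m K {i} = tqK m K i := by simp [tProdK]

lemma uProdK_insert_of_lt {a : Fin m} {s : Finset (Fin m)} (h : ∀ x ∈ s, a < x) :
    uProdK m K (insert a s) = uqK m K a * uProdK m K s := by
  rw [uProdK, Finset.sort_insert (· ≤ ·) (fun x hx => (h x hx).le)
    (fun ha => lt_irrefl a (h a ha)), List.map_cons, List.prod_cons, uProdK]

lemma tProdK_insert_of_lt {a : Fin m} {s : Finset (Fin m)} (h : ∀ x ∈ s, a < x) :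
    tProdK m K (insert a s) = tqK m K a * tProdK m K s := by
  rw [tProdK, Finset.sort_insert (· ≤ ·) (fun x hx => (h x hx).le)
    (fun ha => lt_irrefl a (h a ha)), List.map_cons, List.prod_cons, tProdK]

lemma tqK_mul_tProdK (i : Fin m) (ρ : Finset (Fin m)) :
    tqK m K i * tProdK m K ρ = tProdK m K (insert i ρ) := by
  induction ρ using Finset.induction_on_min with
  | empty => rw [tProdK_insert_of_lt (by simp)]
  | insert a s ha ih =>
    rcases lt_trichotomy i a with hia | rfl | hai
    · refine (tProdK_insert_of_lt ?_).symm
      simpa [hia] using fun x hx => hia.trans (ha x hx)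
    · rw [tProdK_insert_of_lt ha, ← mul_assoc, tqK_mul_tqK_self, Finset.insert_idem,
        tProdK_insert_of_lt ha]
    · have hmin : ∀ x ∈ insert i s, a < x := by simpa [hai] using ha
      rw [tProdK_insert_of_lt ha, ← mul_assoc, tqK_mul_tqK_comm, mul_assoc, ih,
        ← tProdK_insert_of_lt hmin, Finset.insert_comm]

lemma tqK_mul_uProdK_of_notMem {i : Fin m} {σ : Finset (Fin m)} (h : i ∉ σ) :
    tqK m K i * uProdK m K σ = uProdK m K σ * tqK m K i := by
  induction σ using Finset.induction_on_min with
  | empty => simp [uProdK_empty]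
  | insert a s ha ih =>
    have hai : a ≠ i := fun hai => h (hai ▸ Finset.mem_insert_self a s)
    rw [uProdK_insert_of_lt ha, ← mul_assoc, ← uqK_mul_tqK_comm hai, mul_assoc,
      ih (fun hi => h (Finset.mem_insert_of_mem hi)), mul_assoc]

lemma tqK_mul_uProdK_of_mem {i : Fin m} {σ : Finset (Fin m)} (h : i ∈ σ) :
    tqK m K i * uProdK m K σ = 0 := by
  induction σ using Finset.induction_on_min with
  | empty => simp at h
  | insert a s ha ih =>
    rw [uProdK_insert_of_lt ha, ← mul_assoc]
    rcases Finset.mem_insert.mp h with rfl | hi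
    · rw [tqK_mul_uqK_self, zero_mul]
    · rw [← uqK_mul_tqK_comm (ha i hi).ne, mul_assoc, ih hi, mul_zero]

lemma uqK_mul_uProdK_of_mem {i : Fin m} {σ : Finset (Fin m)} (h : i ∈ σ) :
    uqK m K i * uProdK m K σ = 0 := by
  induction σ using Finset.induction_on_min with
  | empty => simp at h
  | insert a s ha ih =>
    rw [uProdK_insert_of_lt ha, ← mul_assoc]
    rcases Finset.mem_insert.mp h with rfl | hi
    · rw [uqK_mul_uqK_self, zero_mul]
    · rw [uqK_mul_uqK_anticomm (ha i hi).ne', smul_mul_assoc, mul_assoc, ih hi, mul_zero]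
      exact smul_zero _

lemma uqK_mul_uProdK_of_notMem {i : Fin m} {σ : Finset (Fin m)} (h : i ∉ σ) :
    uqK m K i * uProdK m K σ =
      (-1 : ℤ) ^ #{x ∈ σ | x < i} • uProdK m K (insert i σ) := by
  induction σ using Finset.induction_on_min with
  | empty =>
    rw [Finset.filter_empty, Finset.card_empty, pow_zero, one_smul,
      uProdK_insert_of_lt (by simp), uProdK_empty]
  | insert a s ha ih =>
    have his : i ∉ s := fun hi => h (Finset.mem_insert_of_mem hi)
    have hia : i ≠ a := fun hia => h (hia ▸ Finset.mem_insert_self a s)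
    rcases lt_or_gt_of_ne hia with hia | hai
    · have hmin : ∀ x ∈ insert a s, i < x := by
        simpa [hia] using fun x hx => hia.trans (ha x hx)
      rw [uProdK_insert_of_lt hmin, Finset.filter_false_of_mem (fun x hx => (hmin x hx).not_gt),
        Finset.card_empty, pow_zero, one_smul]
    · have hmin : ∀ x ∈ insert i s, a < x := by simpa [hai] using ha
      rw [uProdK_insert_of_lt ha, ← mul_assoc, uqK_mul_uqK_anticomm hai.ne', smul_mul_assoc,
        mul_assoc, ih his, mul_smul_comm, ← uProdK_insert_of_lt hmin, Finset.insert_comm,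
        Finset.filter_insert, if_pos hai,
        Finset.card_insert_of_notMem (by simp [(ha a).mt (lt_irrefl a)]), pow_succ', mul_smul]

lemma uqK_mul_uProdK_anticomm {i : Fin m} {σ : Finset (Fin m)} (h : i ∉ σ) :
    uqK m K i * uProdK m K σ = (-1 : ℤ) ^ #σ • (uProdK m K σ * uqK m K i) := by
  induction σ using Finset.induction_on_min with
  | empty => simp [uProdK_empty]
  | insert a s ha ih =>
    have hai : i ≠ a := fun hia => h (hia ▸ Finset.mem_insert_self a s)
    rw [uProdK_insert_of_lt ha, ← mul_assoc, uqK_mul_uqK_anticomm hai, smul_mul_assoc,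
      mul_assoc, ih (fun hi => h (Finset.mem_insert_of_mem hi)), mul_smul_comm,
      Finset.card_insert_of_notMem (fun h' => lt_irrefl a (ha a h')), pow_succ', mul_smul,
      ← mul_assoc]

lemma uProdK_mul_tqK_of_mem {i : Fin m} {σ : Finset (Fin m)} (h : i ∈ σ) :
    uProdK m K σ * tqK m K i = uProdK m K σ := by
  induction σ using Finset.induction_on_min with
  | empty => simp at h
  | insert a s ha ih =>
    rw [uProdK_insert_of_lt ha, mul_assoc]
    rcases Finset.mem_insert.mp h with rfl | hi
    · rw [← tqK_mul_uProdK_of_notMem (fun h' => lt_irrefl i (ha i h')), ← mul_assoc,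
        uqK_mul_tqK_self]
    · rw [ih hi]

lemma uProdK_mul_tProdK_sdiff (σ ρ : Finset (Fin m)) :
    uProdK m K σ * tProdK m K ρ = uProdK m K σ * tProdK m K (ρ \ σ) := by
  induction ρ using Finset.induction with
  | empty => simp
  | insert a s ha ih =>
    rw [← tqK_mul_tProdK, ← mul_assoc]
    by_cases haσ : a ∈ σ
    · rw [uProdK_mul_tqK_of_mem haσ, ih, Finset.insert_sdiff_of_mem _ haσ]
    · rw [← tqK_mul_uProdK_of_notMem haσ, mul_assoc, ih, ← mul_assoc,
        tqK_mul_uProdK_of_notMem haσ, mul_assoc, tqK_mul_tProdK,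
        Finset.insert_sdiff_of_notMem _ haσ]

end Monomials

section Spanning

def monomials (m : ℕ) (K : Finset (Fin m) → Prop) : Set (RK m K) :=
  Set.range fun p : Finset (Fin m) × Finset (Fin m) => uProdK m K p.1 * tProdK m K p.2

lemma monomial_mem_span (σ τ : Finset (Fin m)) :
    uProdK m K σ * tProdK m K τ ∈ Submodule.span ℤ (monomials m K) :=
  Submodule.subset_span ⟨(σ, τ), rfl⟩

lemma mul_mem_span_monomials_of_forall {a : RK m K}
    (h : ∀ σ τ, a * (uProdK m K σ * tProdK m K τ) ∈ Submodule.span ℤ (monomials m K))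
    {z : RK m K} (hz : z ∈ Submodule.span ℤ (monomials m K)) :
    a * z ∈ Submodule.span ℤ (monomials m K) := by
  have hle : Submodule.span ℤ (monomials m K) ≤
      (Submodule.span ℤ (monomials m K)).comap (LinearMap.mulLeft ℤ a) :=
    Submodule.span_le.mpr (by rintro _ ⟨⟨σ, τ⟩, rfl⟩; exact h σ τ)
  exact hle hz

lemma tqK_mul_monomial_mem_span (i : Fin m) (σ τ : Finset (Fin m)) :
    tqK m K i * (uProdK m K σ * tProdK m K τ) ∈ Submodule.span ℤ (monomials m K) := by
  rw [← mul_assoc]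
  by_cases hi : i ∈ σ
  · rw [tqK_mul_uProdK_of_mem hi, zero_mul]
    exact Submodule.zero_mem _
  · rw [tqK_mul_uProdK_of_notMem hi, mul_assoc, tqK_mul_tProdK]
    exact monomial_mem_span _ _

lemma uqK_mul_monomial_mem_span (i : Fin m) (σ τ : Finset (Fin m)) :
    uqK m K i * (uProdK m K σ * tProdK m K τ) ∈ Submodule.span ℤ (monomials m K) := by
  rw [← mul_assoc]
  by_cases hi : i ∈ σ
  · rw [uqK_mul_uProdK_of_mem hi, zero_mul]
    exact Submodule.zero_mem _
  · rw [uqK_mul_uProdK_of_notMem hi, smul_mul_assoc]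
    exact Submodule.smul_mem _ _ (monomial_mem_span _ _)

lemma mkRingHom_mul_mem_span_monomials (a : FA m) {y : RK m K}
    (hy : y ∈ Submodule.span ℤ (monomials m K)) :
    RingQuot.mkRingHom (RKRel m K) a * y ∈ Submodule.span ℤ (monomials m K) := by
  induction a using FreeAlgebra.induction generalizing y with
  | grade0 r =>
    rw [eq_intCast, map_intCast, ← zsmul_eq_mul]
    exact Submodule.smul_mem _ r hy
  | grade1 x =>
    cases x with
    | inl i => exact mul_mem_span_monomials_of_forall (uqK_mul_monomial_mem_span i) hy
    | inr i => exact mul_mem_span_monomials_of_forall (tqK_mul_monomial_mem_span i) hy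
  | mul a b iha ihb =>
    rw [map_mul, mul_assoc]
    exact iha (ihb hy)
  | add a b iha ihb =>
    rw [map_add, add_mul]
    exact Submodule.add_mem _ (iha hy) (ihb hy)

lemma span_monomials_eq_top : Submodule.span ℤ (monomials m K) = ⊤ := by
  refine eq_top_iff.mpr fun z _ => ?_
  obtain ⟨a, rfl⟩ := RingQuot.mkRingHom_surjective (RKRel m K) z
  have h1 : (1 : RK m K) ∈ Submodule.span ℤ (monomials m K) := by
    simpa [uProdK_empty, tProdK_empty] using monomial_mem_span (K := K) ∅ ∅
  simpa using mkRingHom_mul_mem_span_monomials a h1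

def phiBasis (m : ℕ) (K : Finset (Fin m) → Prop) (p : SrcIdx m K) : RK m K :=
  uProdK m K p.1.1 * tProdK m K (p.1.2 \ p.1.1)

lemma Phi_eq_linearCombination : Phi m K = Finsupp.linearCombination ℤ (phiBasis m K) := by
  funext x
  rw [Finsupp.linearCombination_apply]
  rfl

lemma monomial_mem_span_phiBasis (σ τ : Finset (Fin m)) :
    uProdK m K σ * tProdK m K τ ∈ Submodule.span ℤ (Set.range (phiBasis m K)) := by
  by_cases hσ : K σ
  · rw [uProdK_mul_tProdK_sdiff]
    refine Submodule.subset_span ⟨⟨(σ, σ ∪ τ), hσ, Finset.subset_union_left⟩, ?_⟩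
    simp only [phiBasis, Finset.union_sdiff_left]
  · rw [uProdK_eq_zero_of_not_face hσ, zero_mul]
    exact Submodule.zero_mem _

theorem Phi_surjective : Function.Surjective (Phi m K) := by
  have hspan : Submodule.span ℤ (Set.range (phiBasis m K)) = ⊤ := by
    rw [eq_top_iff, ← span_monomials_eq_top, Submodule.span_le]
    rintro _ ⟨⟨σ, τ⟩, rfl⟩
    exact monomial_mem_span_phiBasis σ τ
  rw [Phi_eq_linearCombination, ← LinearMap.range_eq_top, Finsupp.range_linearCombination, hspan]

end Spanning

section Representation

/-- The basis vector `(σ, τ)` models the monomial `u_σ t_τ`. -/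
abbrev MonomialModule (m : ℕ) : Type := (Finset (Fin m) × Finset (Fin m)) →₀ ℤ

def uAct (K : Finset (Fin m) → Prop) (i : Fin m) (p : Finset (Fin m) × Finset (Fin m)) :
    MonomialModule m :=
  if i ∉ p.1 ∧ K (insert i p.1) then
    Finsupp.single (insert i p.1, p.2.erase i) ((-1 : ℤ) ^ #{x ∈ p.1 | x < i})
  else 0

def tAct (i : Fin m) (p : Finset (Fin m) × Finset (Fin m)) : MonomialModule m :=
  if i ∈ p.1 then 0 else Finsupp.single (p.1, insert i p.2) 1

def uOp (K : Finset (Fin m) → Prop) (i : Fin m) : Module.End ℤ (MonomialModule m) :=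
  Finsupp.linearCombination ℤ (uAct K i)

def tOp (i : Fin m) : Module.End ℤ (MonomialModule m) :=
  Finsupp.linearCombination ℤ (tAct i)

@[simp] lemma uOp_single (i : Fin m) (p : Finset (Fin m) × Finset (Fin m)) (c : ℤ) :
    uOp K i (Finsupp.single p c) = c • uAct K i p :=
  Finsupp.linearCombination_single ..

@[simp] lemma tOp_single (i : Fin m) (p : Finset (Fin m) × Finset (Fin m)) (c : ℤ) :
    tOp i (Finsupp.single p c) = c • tAct i p :=
  Finsupp.linearCombination_single ..

lemma uOp_mul_tOp_self (i : Fin m) : uOp K i * tOp i = uOp K i := by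
  ext p : 2
  by_cases hi : i ∈ p.1 <;> simp [tAct, uAct, hi]

lemma tOp_mul_uOp_self (i : Fin m) : tOp i * uOp K i = 0 := by
  ext p : 2
  by_cases hi : i ∈ p.1 <;> simp [tAct, uAct, hi, apply_ite (tOp i)]

lemma uOp_mul_tOp_comm {i j : Fin m} (h : i ≠ j) : uOp K i * tOp j = tOp j * uOp K i := by
  ext p : 2
  by_cases hi : i ∈ p.1 <;> by_cases hj : j ∈ p.1 <;> by_cases hk : K (insert i p.1) <;>
    simp [tAct, uAct, hi, hj, hk, h.symm, Finset.erase_insert_of_ne]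

lemma tOp_mul_self (i : Fin m) : tOp i * tOp i = tOp i := by
  ext p : 2
  by_cases hi : i ∈ p.1 <;> simp [tAct, hi]

lemma uOp_mul_self (i : Fin m) : uOp K i * uOp K i = 0 := by
  ext p : 2
  simp [uAct, apply_ite (uOp K i)]

lemma tOp_mul_comm (i j : Fin m) : tOp i * tOp j = tOp j * tOp i := by
  ext p : 2
  by_cases hi : i ∈ p.1 <;> by_cases hj : j ∈ p.1 <;> simp [tAct, hi, hj, Finset.insert_comm]

lemma uOp_mul_uOp_anticomm (hK : ∀ σ τ, K σ → τ ⊆ σ → K τ) {i j : Fin m}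
    (h : i ≠ j) :
    uOp K i * uOp K j = -(uOp K j * uOp K i) := by
  ext p : 2
  obtain ⟨σ, τ⟩ := p
  by_cases hF : i ∉ σ ∧ j ∉ σ ∧ K (insert i (insert j σ))
  · obtain ⟨hi, hj, hF⟩ := hF
    have hji : j ∉ insert i σ := by simp [hj, h.symm]
    have hij : i ∉ insert j σ := by simp [hi, h]
    have hF' : K (insert j (insert i σ)) := Finset.insert_comm i j σ ▸ hF
    have hKj : K (insert j σ) := hK _ _ hF (Finset.subset_insert _ _)
    have hKi : K (insert i σ) := hK _ _ hF' (Finset.subset_insert _ _)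
    simp only [LinearMap.coe_comp, Function.comp_apply, Finsupp.lsingle_apply,
      Module.End.mul_apply, LinearMap.neg_apply, uOp_single, uAct, hi, hj, hij, hji,
      hF, hKi, hKj, not_false_eq_true, and_self, if_true, one_smul,
      Finsupp.smul_single, smul_eq_mul, ← Finsupp.single_neg, Finset.insert_comm j i σ,
      Finset.erase_right_comm (a := j), Finset.filter_insert]
    congr 1
    rcases lt_or_gt_of_ne h with hlt | hlt <;>
      simp [hlt, hlt.not_gt, Finset.card_insert_of_notMem, hi, hj, pow_succ, mul_comm]
  · simp only [LinearMap.coe_comp, Function.comp_apply, Finsupp.lsingle_apply,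
      Module.End.mul_apply, LinearMap.neg_apply, uOp_single, uAct, one_smul,
      apply_ite (uOp K i), apply_ite (uOp K j), map_zero]
    split_ifs <;> simp_all [Finset.insert_comm]

lemma uOp_list_prod_single (L : List (Fin m)) (p : Finset (Fin m) × Finset (Fin m)) :
    ∃ c τ, (L.map (uOp K)).prod (Finsupp.single p 1) =
      Finsupp.single (L.toFinset ∪ p.1, τ) c := by
  induction L with
  | nil => exact ⟨1, p.2, by simp⟩
  | cons i L ih =>
    obtain ⟨c, τ, hL⟩ := ih
    have hset : insert i (L.toFinset ∪ p.1) = (i :: L).toFinset ∪ p.1 := by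
      rw [List.toFinset_cons, Finset.insert_union]
    rw [List.map_cons, List.prod_cons, Module.End.mul_apply, hL, uOp_single, uAct, hset]
    split_ifs
    · exact ⟨_, _, Finsupp.smul_single _ _ _⟩
    · exact ⟨0, τ, by simp⟩

lemma uOp_prod_eq_zero_of_not_face (hK : ∀ σ τ, K σ → τ ⊆ σ → K τ) (hKempty : K ∅)
    {σ : Finset (Fin m)} (hσ : ¬ K σ) : ((σ.sort (· ≤ ·)).map (uOp K)).prod = 0 := by
  have hsort := Finset.sort_toFinset σ (· ≤ ·)
  cases hL : σ.sort (· ≤ ·) with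
  | nil => simp_all
  | cons i L =>
    ext p : 2
    obtain ⟨c, τ, hp⟩ := uOp_list_prod_single (K := K) L p
    have hnf : ¬ K (insert i (L.toFinset ∪ p.1)) := fun h =>
      hσ (hK _ σ h (by
        rw [← hsort, hL, List.toFinset_cons]
        exact Finset.insert_subset_insert i Finset.subset_union_left))
    simp [hp, uAct, hnf]

def rep (K : Finset (Fin m) → Prop) : FA m →ₐ[ℤ] Module.End ℤ (MonomialModule m) :=
  FreeAlgebra.lift ℤ (Sum.elim (uOp K) tOp)

lemma rep_respects_rel (hK : ∀ σ τ, K σ → τ ⊆ σ → K τ) (hKempty : K ∅)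
    ⦃a b : FA m⦄ (h : RKRel m K a b) : rep K a = rep K b := by
  have hrep_u (i : Fin m) : rep K (uf m i) = uOp K i := by simp [rep, uf]
  have hrep_t (i : Fin m) : rep K (tf m i) = tOp i := by simp [rep, tf]
  cases h with
  | ut_same i => simp [hrep_u, hrep_t, uOp_mul_tOp_self]
  | tu_same i => simp [hrep_u, hrep_t, tOp_mul_uOp_self]
  | ut_comm h => simp [hrep_u, hrep_t, uOp_mul_tOp_comm h]
  | tt_same i => simp [hrep_t, tOp_mul_self]
  | uu_same i => simp [hrep_u, uOp_mul_self]
  | uu_anti h => simp [hrep_u, uOp_mul_uOp_anticomm hK h]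
  | tt_comm i j => simp [hrep_t, tOp_mul_comm]
  | notface σ hσ =>
    rw [ufProd, map_list_prod, List.map_map, show ⇑(rep K) ∘ uf m = uOp K from funext hrep_u,
      uOp_prod_eq_zero_of_not_face hK hKempty hσ, map_zero]

end Representation

section Injectivity

variable (hK : ∀ σ τ, K σ → τ ⊆ σ → K τ) (hKempty : K ∅)

def repQ : RK m K →+* Module.End ℤ (MonomialModule m) :=
  RingQuot.lift ⟨(rep K).toRingHom, rep_respects_rel hK hKempty⟩

lemma repQ_uqK (i : Fin m) : repQ hK hKempty (uqK m K i) = uOp K i := by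
  simp [repQ, uqK, rep, uf]

lemma repQ_tqK (i : Fin m) : repQ hK hKempty (tqK m K i) = tOp i := by
  simp [repQ, tqK, rep, tf]

lemma repQ_tProdK_single_empty (τ : Finset (Fin m)) :
    repQ hK hKempty (tProdK m K τ) (Finsupp.single (∅, ∅) 1) = Finsupp.single (∅, τ) 1 := by
  induction τ using Finset.induction with
  | empty => simp [tProdK_empty]
  | insert a s _ ih =>
    rw [← tqK_mul_tProdK, map_mul, Module.End.mul_apply, ih, repQ_tqK, tOp_single, one_smul,
      tAct, if_neg (Finset.notMem_empty a)]

include hK in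
lemma repQ_uProdK_single {σ : Finset (Fin m)} (hσ : K σ) (τ : Finset (Fin m)) :
    repQ hK hKempty (uProdK m K σ) (Finsupp.single (∅, τ) 1) =
      Finsupp.single (σ, τ \ σ) 1 := by
  induction σ using Finset.induction_on_min with
  | empty => simp [uProdK_empty]
  | insert a s ha ih =>
    have has : a ∉ s := fun h => lt_irrefl a (ha a h)
    rw [uProdK_insert_of_lt ha, map_mul, Module.End.mul_apply,
      ih (hK _ _ hσ (Finset.subset_insert a s)), repQ_uqK, uOp_single, one_smul, uAct,
      if_pos ⟨has, hσ⟩, Finset.filter_false_of_mem fun x hx => (ha x hx).not_gt,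
      Finset.card_empty, pow_zero, Finset.sdiff_insert]

def monomialEval : RK m K →+ MonomialModule m :=
  AddMonoidHom.mk' (fun x => repQ hK hKempty x (Finsupp.single (∅, ∅) 1)) fun _ _ => by
    simp

lemma monomialEval_phiBasis (p : SrcIdx m K) :
    monomialEval hK hKempty (phiBasis m K p) = Finsupp.single (p.1.1, p.1.2 \ p.1.1) 1 := by
  simp only [monomialEval, phiBasis, AddMonoidHom.mk'_apply, map_mul, Module.End.mul_apply,
    repQ_tProdK_single_empty, repQ_uProdK_single hK hKempty p.2.1, Finset.sdiff_idem]

lemma monomialEval_Phi (x : Src m K) :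
    monomialEval hK hKempty (Phi m K x) =
      Finsupp.mapDomain (fun p : SrcIdx m K => (p.1.1, p.1.2 \ p.1.1)) x := by
  rw [Phi_eq_linearCombination]
  induction x using Finsupp.induction_linear with
  | zero => simp
  | add x y hx hy => rw [map_add, map_add, hx, hy, Finsupp.mapDomain_add]
  | single p c =>
    rw [Finsupp.linearCombination_single, map_zsmul, monomialEval_phiBasis,
      Finsupp.mapDomain_single, Finsupp.smul_single, smul_eq_mul, mul_one]

include hK hKempty in
theorem Phi_injective : Function.Injective (Phi m K) := by
  have hg : Function.Injective fun p : SrcIdx m K => (p.1.1, p.1.2 \ p.1.1) := by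
    intro p q h
    obtain ⟨hσ, hd⟩ := Prod.mk.inj h
    refine Subtype.ext (Prod.ext hσ ?_)
    rw [← Finset.union_sdiff_of_subset p.2.2, hd, hσ, Finset.union_sdiff_of_subset q.2.2]
  intro x y hxy
  apply Finsupp.mapDomain_injective hg
  rw [← monomialEval_Phi hK hKempty, hxy, monomialEval_Phi]

end Injectivity

section Differential

lemma srcDelta_eq_linearCombination :
    srcDelta m K = Finsupp.linearCombination ℤ (srcDeltaBasis m K) := by
  funext x
  rw [Finsupp.linearCombination_apply]
  rfl

variable (d : RK m K →+ RK m K) (hd_t : ∀ i, d (tqK m K i) = uqK m K i)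
  (hd_u : ∀ i, d (uqK m K i) = 0)
  (hd_leibniz : ∀ (k : ℕ) (x y : RK m K), x ∈ degreePart m K k →
    d (x * y) = d x * y + (-1 : ℤ) ^ k • (x * d y))

lemma monomial_mem_degreePart (σ τ : Finset (Fin m)) :
    uProdK m K σ * tProdK m K τ ∈ degreePart m K #σ :=
  Submodule.subset_span ⟨σ, τ, rfl, rfl⟩

lemma uProdK_mem_degreePart (σ : Finset (Fin m)) : uProdK m K σ ∈ degreePart m K #σ := by
  simpa [tProdK_empty] using monomial_mem_degreePart (K := K) σ ∅

lemma uqK_mem_degreePart (i : Fin m) : uqK m K i ∈ degreePart m K 1 := by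
  simpa [uProdK_singleton] using uProdK_mem_degreePart (K := K) {i}

lemma tqK_mem_degreePart (i : Fin m) : tqK m K i ∈ degreePart m K 0 := by
  simpa [uProdK_empty, tProdK_singleton] using
    monomial_mem_degreePart (K := K) ∅ {i}

include hd_leibniz in
lemma d_one : d 1 = 0 := by
  simpa using hd_leibniz 0 1 1 (by simpa [uProdK_empty] using uProdK_mem_degreePart (K := K) ∅)

include hd_u hd_leibniz in
lemma d_uProdK (σ : Finset (Fin m)) : d (uProdK m K σ) = 0 := by
  induction σ using Finset.induction_on_min with
  | empty => rw [uProdK_empty, d_one d hd_leibniz]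
  | insert a s ha ih =>
    rw [uProdK_insert_of_lt ha, hd_leibniz 1 _ _ (uqK_mem_degreePart a), hd_u, ih, zero_mul,
      mul_zero, zero_add]
    exact smul_zero _

include hd_t hd_leibniz in
lemma d_tProdK (τ : Finset (Fin m)) :
    d (tProdK m K τ) = ∑ v ∈ τ, uqK m K v * tProdK m K (τ.erase v) := by
  induction τ using Finset.induction with
  | empty => rw [tProdK_empty, d_one d hd_leibniz, Finset.sum_empty]
  | insert a s ha ih =>
    rw [← tqK_mul_tProdK, hd_leibniz 0 _ _ (tqK_mem_degreePart a), hd_t, pow_zero, one_smul,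
      ih, Finset.sum_insert ha, Finset.erase_insert ha, Finset.mul_sum]
    congr 1
    refine Finset.sum_congr rfl fun v hv => ?_
    have hav : a ≠ v := fun h => ha (h ▸ hv)
    rw [← mul_assoc, ← uqK_mul_tqK_comm hav.symm, mul_assoc, tqK_mul_tProdK,
      Finset.erase_insert_of_ne hav]

include hd_t hd_u hd_leibniz in
lemma d_uProdK_mul_tProdK {σ τ : Finset (Fin m)} (h : Disjoint σ τ) :
    d (uProdK m K σ * tProdK m K τ) =
      ∑ v ∈ τ, (-1 : ℤ) ^ #{x ∈ σ | x < v} •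
        (uProdK m K (insert v σ) * tProdK m K (τ.erase v)) := by
  rw [hd_leibniz _ _ _ (uProdK_mem_degreePart σ), d_uProdK d hd_u hd_leibniz, zero_mul,
    zero_add, d_tProdK d hd_t hd_leibniz, ← smul_mul_assoc, Finset.mul_sum]
  refine Finset.sum_congr rfl fun v hv => ?_
  have hvσ : v ∉ σ := Finset.disjoint_right.mp h hv
  rw [← mul_assoc, smul_mul_assoc, ← uqK_mul_uProdK_anticomm hvσ,
    uqK_mul_uProdK_of_notMem hvσ, smul_mul_assoc]

include hd_t hd_u hd_leibniz in
lemma Phi_srcDeltaBasis (p : SrcIdx m K) :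
    Phi m K (srcDeltaBasis m K p) = d (phiBasis m K p) := by
  rw [Phi_eq_linearCombination, srcDeltaBasis, map_sum, phiBasis,
    d_uProdK_mul_tProdK d hd_t hd_u hd_leibniz Finset.disjoint_sdiff]
  refine Eq.trans (Finset.sum_congr rfl fun v _ => ?_) (Finset.sum_attach _ _)
  split_ifs with hv
  · rw [← Finset.sdiff_insert]
    exact Finsupp.linearCombination_single ..
  · rw [map_zero, uProdK_eq_zero_of_not_face hv, zero_mul]
    exact (smul_zero _).symm

include hd_t hd_u hd_leibniz in
theorem Phi_srcDelta (x : Src m K) : Phi m K (srcDelta m K x) = d (Phi m K x) := by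
  rw [srcDelta_eq_linearCombination, Phi_eq_linearCombination]
  induction x using Finsupp.induction_linear with
  | zero => simp
  | add x y hx hy => rw [map_add, map_add, map_add, hx, hy, map_add]
  | single p c =>
    rw [Finsupp.linearCombination_single, map_zsmul, Finsupp.linearCombination_single,
      map_zsmul, ← Phi_eq_linearCombination, Phi_srcDeltaBasis d hd_t hd_u hd_leibniz]

end Differential

end RK

/-- eq. (2.4), cf. Cai: for a simplicial complex `K` on `[m]`, the map
`σ* ↦ u_σ t_{ω∖σ}`, summed over all `ω ⊆ [m]`, is a (degree-one-shifting) isomorphism of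
cochain complexes `⊕_{ω⊆[m]} C̃*(K_ω) ≅ R_K`, where `R_K` carries the differential `d`
determined by `d t_i = u_i`, `d u_i = 0` and the graded Leibniz rule. -/
theorem phi_iso_of_cochain_complexes (m : ℕ)
    (K : Finset (Fin m) → Prop)
    (hK : ∀ σ τ, K σ → τ ⊆ σ → K τ)
    (hKempty : K ∅)
    (d : RK m K →+ RK m K)
    (hd_t : ∀ i, d (tqK m K i) = uqK m K i)
    (hd_u : ∀ i, d (uqK m K i) = 0)
    (hd_leibniz : ∀ (k : ℕ) (x y : RK m K), x ∈ degreePart m K k →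
      d (x * y) = d x * y + (-1 : ℤ) ^ k • (x * d y)) :
    Function.Bijective (Phi m K) ∧
    ∀ x : Src m K, Phi m K (srcDelta m K x) = d (Phi m K x) :=
  ⟨⟨RK.Phi_injective hK hKempty, RK.Phi_surjective⟩, RK.Phi_srcDelta d hd_t hd_u hd_leibniz⟩

end
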